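/- arXiv:1807.06290 — 10 statements merged into one kernel-verified Lean document; each statement's English description precedes it below -/
import Mathlib

section
/- For every real r with 1 < r < 2, there exists a unique t_1 ∈ (0,1) satisfying 2 − r − t_1^{r−1} = (1 − t_1^r)/((1+t_1)^{r−1}(1−t_1)) − 1, and moreover 2 − r − t_1^{r−1} > 0 (equivalently, a_1(r) = (2 − r − t_1^{r−1})/r > 0). -/
open Real Set Filter Topology

private noncomputable def stmt2_fr (r : ℝ) (t : ℝ) : ℝ :=
  (2 - r - t ^ (r - 1)) - ((1 - t ^ r) / ((1 + t) ^ (r - 1) * (1 - t)) - 1)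

private lemma stmt2_amgm (r : ℝ) (hr1 : 1 < r) (hr2 : r < 2) {t : ℝ} (ht : 0 < t) :
    1 ≤ (2 - r) * t ^ (r - 1) + (r - 1) * t ^ (r - 2) := by
  have h := Real.geom_mean_le_arith_mean2_weighted (by linarith : (0:ℝ) ≤ 2 - r)
    (by linarith : (0:ℝ) ≤ r - 1) (Real.rpow_nonneg ht.le (r-1)) (Real.rpow_nonneg ht.le (r-2))
    (by ring)
  calc (1:ℝ) = (t ^ (r-1)) ^ (2-r) * (t ^ (r-2)) ^ (r-1) := by
        rw [← Real.rpow_mul ht.le, ← Real.rpow_mul ht.le, ← Real.rpow_add ht]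
        rw [show (r-1)*(2-r) + (r-2)*(r-1) = 0 by ring, Real.rpow_zero]
    _ ≤ _ := h

private lemma stmt2_bern (r : ℝ) (hr1 : 1 < r) (hr2 : r < 2) {t : ℝ} (ht : 0 ≤ t) :
    (1 + t) ^ (r - 1) ≤ 1 + (r - 1) * t := by
  have h := Real.geom_mean_le_arith_mean2_weighted (by linarith : (0:ℝ) ≤ r - 1)
    (by linarith : (0:ℝ) ≤ 2 - r) (by linarith : (0:ℝ) ≤ 1 + t) zero_le_one (by ring)
  rw [Real.one_rpow, mul_one] at h
  calc (1+t) ^ (r-1) ≤ (r-1)*(1+t) + (2-r)*1 := h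
    _ = 1 + (r-1)*t := by ring

private lemma stmt2_two_rpow_le (r : ℝ) (hr1 : 1 < r) (hr2 : r < 2) : (2:ℝ) ^ (r - 1) ≤ r := by
  have h := convexOn_exp.2 (Set.mem_univ (0:ℝ)) (Set.mem_univ (Real.log 2))
    (by linarith : (0:ℝ) ≤ 2 - r) (by linarith : (0:ℝ) ≤ r - 1) (by ring)
  simp only [smul_eq_mul, mul_zero, zero_add, Real.exp_zero, Real.exp_log two_pos] at h
  rw [Real.rpow_def_of_pos two_pos]
  calc Real.exp (Real.log 2 * (r-1)) = Real.exp ((r-1) * Real.log 2) := by ring_nf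
    _ ≤ (2-r)*1 + (r-1)*2 := h
    _ = r := by ring

private lemma stmt2_psi_hasDeriv (r : ℝ) {x : ℝ} (hx : 0 < x) :
    HasDerivAt (fun t : ℝ => (2 - r) * (1 - t ^ r) - r * (t ^ (r - 1) - t))
      ((2 - r) * (-(r * x ^ (r - 1))) - r * ((r - 1) * x ^ (r - 2) - 1)) x := by
  have h1 : HasDerivAt (fun t : ℝ => t ^ r) (r * x ^ (r - 1)) x :=
    Real.hasDerivAt_rpow_const (Or.inl hx.ne')
  have h2 : HasDerivAt (fun t : ℝ => t ^ (r - 1)) ((r - 1) * x ^ (r - 1 - 1)) x :=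
    Real.hasDerivAt_rpow_const (Or.inl hx.ne')
  have h3 : HasDerivAt (fun t : ℝ => t) 1 x := hasDerivAt_id x
  have := ((h1.const_sub 1).const_mul (2 - r)).sub ((h2.sub h3).const_mul r)
  rw [show r - 2 = r - 1 - 1 by ring]
  exact this

private lemma stmt2_psi_nonneg (r : ℝ) (hr1 : 1 < r) (hr2 : r < 2) {t : ℝ}
    (ht : 0 < t) (ht1 : t ≤ 1) :
    0 ≤ (2 - r) * (1 - t ^ r) - r * (t ^ (r - 1) - t) := by
  set ψ : ℝ → ℝ := fun t => (2 - r) * (1 - t ^ r) - r * (t ^ (r - 1) - t) with hψ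
  have hanti : AntitoneOn ψ (Icc t 1) := by
    apply antitoneOn_of_deriv_nonpos (convex_Icc t 1)
    · intro x hx
      exact (stmt2_psi_hasDeriv r (lt_of_lt_of_le ht hx.1)).continuousAt.continuousWithinAt
    · intro x hx
      rw [interior_Icc] at hx
      exact (stmt2_psi_hasDeriv r (ht.trans hx.1)).differentiableAt.differentiableWithinAt
    · intro x hx
      rw [interior_Icc] at hx
      have hx0 : 0 < x := ht.trans hx.1
      rw [(stmt2_psi_hasDeriv r hx0).deriv]
      have := stmt2_amgm r hr1 hr2 hx0
      nlinarith [this]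
  have h1 : ψ 1 = 0 := by simp [hψ, Real.one_rpow]
  have := hanti (Set.mem_Icc.2 ⟨le_refl t, ht1⟩) (Set.mem_Icc.2 ⟨ht1, le_refl 1⟩) ht1
  rw [h1] at this
  exact this

private lemma stmt2_f_deriv_neg (r : ℝ) (hr1 : 1 < r) (hr2 : r < 2) {x : ℝ}
    (hx : 0 < x) (hx1 : x < 1) :
    ∃ y < 0, HasDerivAt (stmt2_fr r) y x := by
  have hx1' : (0:ℝ) < 1 - x := by linarith
  have h1x : (0:ℝ) < 1 + x := by linarith
  have hA : (0:ℝ) < (1 + x) ^ (r - 1) := Real.rpow_pos_of_pos h1x _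
  have hA2 : (0:ℝ) < (1 + x) ^ (r - 2) := Real.rpow_pos_of_pos h1x _
  have hD : (0:ℝ) < (1 + x) ^ (r - 1) * (1 - x) := mul_pos hA hx1'
  have hN : HasDerivAt (fun t : ℝ => 1 - t ^ r) (-(r * x ^ (r - 1))) x :=
    (Real.hasDerivAt_rpow_const (Or.inl hx.ne')).const_sub 1
  have hB : HasDerivAt (fun t : ℝ => (1 + t) ^ (r - 1))
      ((r - 1) * (1 + x) ^ (r - 1 - 1) * 1) x := by
    have := (HasDerivAt.const_add 1 (hasDerivAt_id x)).rpow_const (p := r - 1) (Or.inl h1x.ne')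
    simpa [mul_comm] using this
  have hC : HasDerivAt (fun t : ℝ => 1 - t) (-1 : ℝ) x := (hasDerivAt_id x).const_sub 1
  have hDd : HasDerivAt (fun t : ℝ => (1 + t) ^ (r - 1) * (1 - t))
      ((r - 1) * (1 + x) ^ (r - 1 - 1) * 1 * (1 - x) + (1 + x) ^ (r - 1) * (-1)) x := hB.mul hC
  have hQ : HasDerivAt (fun t : ℝ => (1 - t ^ r) / ((1 + t) ^ (r - 1) * (1 - t)))
      ((-(r * x ^ (r - 1)) * ((1 + x) ^ (r - 1) * (1 - x)) -
        (1 - x ^ r) * ((r - 1) * (1 + x) ^ (r - 1 - 1) * 1 * (1 - x) + (1 + x) ^ (r - 1) * (-1)))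
        / ((1 + x) ^ (r - 1) * (1 - x)) ^ 2) x := hN.div hDd hD.ne'
  have hP : HasDerivAt (fun t : ℝ => 2 - r - t ^ (r - 1))
      (-((r - 1) * x ^ (r - 1 - 1))) x :=
    (Real.hasDerivAt_rpow_const (Or.inl hx.ne')).const_sub (2 - r)
  refine ⟨_, ?_, hP.sub (hQ.sub_const 1)⟩
  have hnum : 0 ≤ (-(r * x ^ (r - 1)) * ((1 + x) ^ (r - 1) * (1 - x)) -
      (1 - x ^ r) * ((r - 1) * (1 + x) ^ (r - 1 - 1) * 1 * (1 - x) +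
        (1 + x) ^ (r - 1) * (-1))) := by
    have hpsi := stmt2_psi_nonneg r hr1 hr2 hx hx1.le
    have e1 : (1 + x) ^ (r - 1) = (1 + x) ^ (r - 2) * (1 + x) := by
      rw [← Real.rpow_add_one h1x.ne']; ring_nf
    have e2 : x ^ r = x ^ (r - 1) * x := by
      rw [← Real.rpow_add_one hx.ne']; ring_nf
    have e3 : (r - 1 - 1) = r - 2 := by ring
    rw [e3, e1, e2]
    rw [e2] at hpsi
    nlinarith [hpsi, hA2, sq_nonneg x]
  have h2 : 0 < (r - 1) * x ^ (r - 1 - 1) :=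
    mul_pos (by linarith) (Real.rpow_pos_of_pos hx _)
  have h3 : 0 ≤ (-(r * x ^ (r - 1)) * ((1 + x) ^ (r - 1) * (1 - x)) -
      (1 - x ^ r) * ((r - 1) * (1 + x) ^ (r - 1 - 1) * 1 * (1 - x) + (1 + x) ^ (r - 1) * (-1)))
        / ((1 + x) ^ (r - 1) * (1 - x)) ^ 2 := div_nonneg hnum (sq_nonneg _)
  linarith

private lemma stmt2_anti (r : ℝ) (hr1 : 1 < r) (hr2 : r < 2) :
    StrictAntiOn (stmt2_fr r) (Ioo 0 1) := by
  apply strictAntiOn_of_deriv_neg (convex_Ioo 0 1)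
  · intro x hx
    obtain ⟨y, _, hy⟩ := stmt2_f_deriv_neg r hr1 hr2 hx.1 hx.2
    exact hy.continuousAt.continuousWithinAt
  · intro x hx
    rw [interior_Ioo] at hx
    obtain ⟨y, hy0, hy⟩ := stmt2_f_deriv_neg r hr1 hr2 hx.1 hx.2
    rw [hy.deriv]
    exact hy0

private lemma stmt2_g_gt_one (r : ℝ) (hr1 : 1 < r) (hr2 : r < 2) {t : ℝ}
    (ht : 0 < t) (ht1 : t < 1) :
    1 < (1 - t ^ r) / ((1 + t) ^ (r - 1) * (1 - t)) := by
  have h1t : (0:ℝ) < 1 + t := by linarith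
  have hD : (0:ℝ) < (1 + t) ^ (r - 1) * (1 - t) :=
    mul_pos (Real.rpow_pos_of_pos h1t _) (by linarith)
  rw [lt_div_iff₀ hD, one_mul]
  have hstrict : t ^ (r - 1) < (2 - r) + (r - 1) * t := by
    have hlt : Real.log t < 0 := Real.log_neg ht ht1
    have h := strictConvexOn_exp.2 (Set.mem_univ (Real.log t)) (Set.mem_univ (0:ℝ))
      hlt.ne (by linarith : (0:ℝ) < r - 1) (by linarith : (0:ℝ) < 2 - r) (by ring)
    simp only [smul_eq_mul, mul_zero, add_zero, Real.exp_zero, Real.exp_log ht] at h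
    rw [Real.rpow_def_of_pos ht]
    calc Real.exp (Real.log t * (r - 1)) = Real.exp ((r - 1) * Real.log t) := by ring_nf
      _ < (r - 1) * t + (2 - r) * 1 := h
      _ = (2 - r) + (r - 1) * t := by ring
  have e2 : t ^ r = t ^ (r - 1) * t := by
    rw [← Real.rpow_add_one ht.ne']; ring_nf
  have hb := stmt2_bern r hr1 hr2 ht.le
  rw [e2]
  nlinarith [hb, hstrict, ht, ht1]

private lemma stmt2_lim_zero (r : ℝ) (hr1 : 1 < r) (hr2 : r < 2) :
    Tendsto (stmt2_fr r) (𝓝[>] (0:ℝ)) (𝓝 (2 - r)) := by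
  have c1 : ContinuousAt (fun t : ℝ => t ^ (r - 1)) 0 :=
    Real.continuousAt_rpow_const 0 (r - 1) (Or.inr (by linarith))
  have c2 : ContinuousAt (fun t : ℝ => t ^ r) 0 :=
    Real.continuousAt_rpow_const 0 r (Or.inr (by linarith))
  have c3 : ContinuousAt (fun t : ℝ => (1 + t) ^ (r - 1)) 0 := by
    have : ContinuousAt (fun y : ℝ => y ^ (r - 1)) (1 + 0) :=
      Real.continuousAt_rpow_const _ _ (Or.inl (by norm_num))
    exact this.comp (by fun_prop)
  have c4 : ContinuousAt (fun t : ℝ => (1 + t) ^ (r - 1) * (1 - t)) 0 :=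
    c3.mul (by fun_prop)
  have hden : ((1 + (0:ℝ)) ^ (r - 1) * (1 - 0)) ≠ 0 := by
    simp [Real.one_rpow]
  have cf : ContinuousAt (stmt2_fr r) 0 := by
    unfold stmt2_fr
    exact ((continuousAt_const.sub c1)).sub
      ((((continuousAt_const.sub c2)).div c4 hden).sub continuousAt_const)
  have h0 : stmt2_fr r 0 = 2 - r := by
    unfold stmt2_fr
    rw [Real.zero_rpow (by intro h; linarith [sub_eq_zero.mp h] : r - 1 ≠ 0),
      Real.zero_rpow (by intro h; rw [h] at hr1; linarith : r ≠ 0)]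
    norm_num [Real.one_rpow]
  have := cf.continuousWithinAt (s := Ioi (0:ℝ))
  rw [ContinuousWithinAt, h0] at this
  exact this

private lemma stmt2_lim_one (r : ℝ) (hr1 : 1 < r) (hr2 : r < 2) :
    Tendsto (stmt2_fr r) (𝓝[<] (1:ℝ)) (𝓝 (2 - r - r / 2 ^ (r - 1))) := by
  have hslope : Tendsto (fun t : ℝ => (1 - t ^ r) / (1 - t)) (𝓝[<] (1:ℝ)) (𝓝 r) := by
    have hd : HasDerivAt (fun x : ℝ => x ^ r) (r * (1:ℝ) ^ (r - 1)) 1 :=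
      Real.hasDerivAt_rpow_const (Or.inl one_ne_zero)
    rw [Real.one_rpow, mul_one] at hd
    have := (hasDerivAt_iff_tendsto_slope.mp hd).mono_left
      (nhdsWithin_mono 1 (fun x hx => ne_of_lt hx) : 𝓝[<] (1:ℝ) ≤ 𝓝[≠] 1)
    apply this.congr'
    filter_upwards [self_mem_nhdsWithin] with t (ht : t < 1)
    have : t - 1 ≠ 0 := by intro h; apply absurd (by linarith : t = 1) (ne_of_lt ht)
    rw [slope_def_field]
    rw [div_eq_div_iff (by intro h; apply this; linarith) (by intro h; apply this; linarith)]
    rw [Real.one_rpow]; ring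
  have hc : ContinuousAt (fun t : ℝ => ((1 + t) ^ (r - 1))⁻¹) 1 := by
    have : ContinuousAt (fun y : ℝ => y ^ (r - 1)) (1 + 1) :=
      Real.continuousAt_rpow_const _ _ (Or.inl (by norm_num))
    exact (ContinuousAt.comp this (by fun_prop)).inv₀
      (by norm_num; positivity)
  have hq : Tendsto (fun t : ℝ => (1 - t ^ r) / ((1 + t) ^ (r - 1) * (1 - t)))
      (𝓝[<] (1:ℝ)) (𝓝 (r / 2 ^ (r - 1))) := by
    have := hslope.mul (hc.continuousWithinAt (s := Iio (1:ℝ)))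
    have heq : r * ((1 + (1:ℝ)) ^ (r - 1))⁻¹ = r / 2 ^ (r - 1) := by
      norm_num [div_eq_mul_inv]
    rw [heq] at this
    apply this.congr'
    filter_upwards [self_mem_nhdsWithin] with t (ht : t < 1)
    field_simp
  have hpow : Tendsto (fun t : ℝ => t ^ (r - 1)) (𝓝[<] (1:ℝ)) (𝓝 1) := by
    have : ContinuousAt (fun t : ℝ => t ^ (r - 1)) 1 :=
      Real.continuousAt_rpow_const _ _ (Or.inl one_ne_zero)
    have := this.continuousWithinAt (s := Iio (1:ℝ))
    rwa [ContinuousWithinAt, Real.one_rpow] at this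
  have : Tendsto (stmt2_fr r) (𝓝[<] (1:ℝ)) (𝓝 ((2 - r - 1) - (r / 2 ^ (r - 1) - 1))) := by
    unfold stmt2_fr
    exact ((tendsto_const_nhds.sub hpow)).sub ((hq.sub tendsto_const_nhds))
  convert this using 2
  ring

theorem stmt_2 (r : ℝ) (hr1 : 1 < r) (hr2 : r < 2) :
    ∃ t₁ : ℝ, t₁ ∈ Set.Ioo (0 : ℝ) 1 ∧
      2 - r - t₁ ^ (r - 1) = (1 - t₁ ^ r) / ((1 + t₁) ^ (r - 1) * (1 - t₁)) - 1 ∧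
      0 < 2 - r - t₁ ^ (r - 1) ∧
      ∀ t : ℝ, t ∈ Set.Ioo (0 : ℝ) 1 →
        2 - r - t ^ (r - 1) = (1 - t ^ r) / ((1 + t) ^ (r - 1) * (1 - t)) - 1 →
        t = t₁ := by
  have hanti := stmt2_anti r hr1 hr2
  -- point a with fr a > 0
  have hev0 : ∀ᶠ x in 𝓝[>] (0:ℝ), 0 < stmt2_fr r x :=
    (stmt2_lim_zero r hr1 hr2).eventually (eventually_gt_nhds (by linarith : (0:ℝ) < 2 - r))
  have hmem0 : Ioo (0:ℝ) 1 ∈ 𝓝[>] (0:ℝ) :=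
    Ioo_mem_nhdsGT_of_mem ⟨le_refl 0, one_pos⟩
  obtain ⟨a, ha_pos, ha_mem⟩ := (hev0.and (eventually_of_mem hmem0 (fun x hx => hx))).exists
  -- point b with fr b < 0
  have hL : 2 - r - r / 2 ^ (r - 1) < 0 := by
    have h2r : (0:ℝ) < (2:ℝ) ^ (r - 1) := Real.rpow_pos_of_pos two_pos _
    have hle := stmt2_two_rpow_le r hr1 hr2
    rw [sub_neg, lt_div_iff₀ h2r]
    nlinarith
  have hev1 : ∀ᶠ x in 𝓝[<] (1:ℝ), stmt2_fr r x < 0 :=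
    (stmt2_lim_one r hr1 hr2).eventually (eventually_lt_nhds hL)
  have hmem1 : Ioo (0:ℝ) 1 ∈ 𝓝[<] (1:ℝ) :=
    Ioo_mem_nhdsLT_of_mem ⟨one_pos, le_refl 1⟩
  obtain ⟨b, hb_neg, hb_mem⟩ := (hev1.and (eventually_of_mem hmem1 (fun x hx => hx))).exists
  -- a < b
  have hab : a < b := by
    rcases lt_trichotomy a b with h | h | h
    · exact h
    · exfalso; rw [h] at ha_pos; linarith
    · exfalso; have := hanti hb_mem ha_mem h; linarith
  -- IVT
  have hcont : ContinuousOn (stmt2_fr r) (Icc a b) := by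
    intro x hx
    have hx' : x ∈ Ioo (0:ℝ) 1 :=
      ⟨lt_of_lt_of_le ha_mem.1 hx.1, lt_of_le_of_lt hx.2 hb_mem.2⟩
    obtain ⟨y, _, hy⟩ := stmt2_f_deriv_neg r hr1 hr2 hx'.1 hx'.2
    exact hy.continuousAt.continuousWithinAt
  have h0mem : (0:ℝ) ∈ Ioo (stmt2_fr r b) (stmt2_fr r a) := ⟨hb_neg, ha_pos⟩
  obtain ⟨t₁, ht₁_mem, ht₁_eq⟩ := intermediate_value_Ioo' hab.le hcont h0mem
  have ht₁ : t₁ ∈ Ioo (0:ℝ) 1 :=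
    ⟨lt_trans ha_mem.1 ht₁_mem.1, lt_trans ht₁_mem.2 hb_mem.2⟩
  refine ⟨t₁, ht₁, ?_, ?_, ?_⟩
  · unfold stmt2_fr at ht₁_eq; linarith [ht₁_eq]
  · have hg := stmt2_g_gt_one r hr1 hr2 ht₁.1 ht₁.2
    unfold stmt2_fr at ht₁_eq; linarith [ht₁_eq]
  · intro t ht hteq
    have hft : stmt2_fr r t = 0 := by unfold stmt2_fr; linarith
    exact hanti.injOn ht ht₁ (by rw [hft, ht₁_eq])
end

section
/- For every real r with 2 < r < 3, there exists a unique t_2 ∈ (0,1) satisfying r − 2 − t_2 = (1+t_2)^{r−1}(1−t_2)/(1 − t_2^r) − 1, and moreover r − 2 − t_2 > 0 (equivalently, a_2(r) = (r − 2 − t_2)/r > 0). -/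
/-!
Write `g t = (1 + t) ^ (r - 1) * (1 - t) / (1 - t ^ r)`, so the equation reads `g t + t = r - 1`.
The quotient rule gives `g' t = (1 + t) ^ (r - 2) * P t / (1 - t ^ r) ^ 2` with
`P t = (r - 2) - r t + r t ^ (r - 1) - (r - 2) t ^ r`; since `P 1 = 0` and `P' < 0` on `(0, 1)`
by weighted AM-GM, `P > 0` there and `g` is strictly increasing on `[0, 1)`, starting at `g 0 = 1`.
Hence `g t + t` is strictly increasing, equals `1 < r - 1` at `0` and exceeds `r - 1` at `r - 2`:
the intermediate value theorem gives exactly one root, and it lies in `(0, r - 2)`.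
-/

open Real Set

noncomputable def powRatio (r t : ℝ) : ℝ := (1 + t) ^ (r - 1) * (1 - t) / (1 - t ^ r)

noncomputable def powRatioDerivNum (r t : ℝ) : ℝ :=
  (r - 2) - r * t + r * t ^ (r - 1) - (r - 2) * t ^ r

/-- Weighted AM-GM for `t ^ (r - 1)` and `1` with weights `(r - 2) / (r - 1)` and `1 / (r - 1)`. -/
lemma sub_one_mul_rpow_sub_two_lt {r t : ℝ} (hr : 2 < r) (ht0 : 0 ≤ t) (ht1 : t ≠ 1) :
    (r - 1) * t ^ (r - 2) < 1 + (r - 2) * t ^ (r - 1) := by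
  have hr1 : 0 < r - 1 := by linarith
  have hne : t ^ (r - 1) ≠ 1 := fun h =>
    ht1 (rpow_left_injOn hr1.ne' ht0 (by norm_num) (by simpa using h))
  have amgm := (geom_mean_lt_arith_mean2_weighted_iff_of_pos (w₁ := (r - 2) / (r - 1))
    (w₂ := 1 / (r - 1)) (div_pos (by linarith) hr1) (div_pos one_pos hr1)
    (rpow_nonneg ht0 _) zero_le_one (by field_simp; ring)).mpr hne
  rw [← rpow_mul ht0, one_rpow, mul_one, mul_div_cancel₀ _ hr1.ne'] at amgm
  have := mul_lt_mul_of_pos_left amgm hr1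
  field_simp at this
  linarith

lemma hasDerivAt_powRatioDerivNum {r : ℝ} (hr : 2 ≤ r) (t : ℝ) :
    HasDerivAt (powRatioDerivNum r)
      (r * ((r - 1) * t ^ (r - 2) - 1 - (r - 2) * t ^ (r - 1))) t := by
  have h1 := (hasDerivAt_rpow_const (x := t) (p := r - 1) (Or.inr (by linarith))).const_mul r
  have h2 := (hasDerivAt_rpow_const (x := t) (p := r) (Or.inr (by linarith))).const_mul (r - 2)
  refine ((((hasDerivAt_id t).const_mul r).const_sub (r - 2)).add h1 |>.sub h2).congr_deriv ?_
  rw [show r - 1 - 1 = r - 2 by ring]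
  ring

lemma powRatioDerivNum_pos {r t : ℝ} (hr : 2 < r) (ht0 : 0 ≤ t) (ht1 : t < 1) :
    0 < powRatioDerivNum r t := by
  have hanti : StrictAntiOn (powRatioDerivNum r) (Icc 0 1) := by
    refine strictAntiOn_of_hasDerivWithinAt_neg (convex_Icc 0 1)
      (fun x _ => (hasDerivAt_powRatioDerivNum hr.le x).continuousAt.continuousWithinAt)
      (fun x _ => (hasDerivAt_powRatioDerivNum hr.le x).hasDerivWithinAt) (fun x hx => ?_)
    rw [interior_Icc] at hx
    have := sub_one_mul_rpow_sub_two_lt hr hx.1.le hx.2.ne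
    nlinarith
  have := hanti ⟨ht0, ht1.le⟩ ⟨zero_le_one, le_rfl⟩ ht1
  simp only [powRatioDerivNum, one_rpow] at this ⊢
  linarith

lemma hasDerivAt_powRatio {r t : ℝ} (hr : 1 ≤ r) (ht0 : 0 ≤ t) (ht1 : t < 1) :
    HasDerivAt (powRatio r)
      ((1 + t) ^ (r - 2) * powRatioDerivNum r t / (1 - t ^ r) ^ 2) t := by
  have h1t : 0 < 1 + t := by linarith
  have hden : 0 < 1 - t ^ r := sub_pos.mpr (rpow_lt_one ht0 ht1 (by linarith))
  have hnum := (((hasDerivAt_id t).const_add 1).rpow_const (p := r - 1) (Or.inl h1t.ne')).mul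
    ((hasDerivAt_id t).const_sub 1)
  have hdenom := ((hasDerivAt_id t).rpow_const (p := r) (Or.inr hr)).const_sub 1
  refine (hnum.div hdenom hden.ne').congr_deriv ?_
  have e1 : (1 + t) ^ (r - 1) = (1 + t) ^ (r - 2) * (1 + t) := by
    rw [← rpow_add_one h1t.ne']; ring_nf
  have e2 : t ^ r = t ^ (r - 1) * t := by
    rw [← rpow_add_one' ht0 (by linarith)]; ring_nf
  simp only [id, Pi.mul_apply, powRatioDerivNum]
  rw [show r - 1 - 1 = r - 2 by ring, e1, e2]
  ring

lemma continuousOn_powRatio {r : ℝ} (hr : 1 ≤ r) : ContinuousOn (powRatio r) (Ico 0 1) :=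
  fun _ ht => (hasDerivAt_powRatio hr ht.1 ht.2).continuousAt.continuousWithinAt

lemma strictMonoOn_powRatio {r : ℝ} (hr : 2 < r) : StrictMonoOn (powRatio r) (Ico 0 1) := by
  refine strictMonoOn_of_hasDerivWithinAt_pos (convex_Ico 0 1)
    (continuousOn_powRatio (by linarith))
    (f' := fun t => (1 + t) ^ (r - 2) * powRatioDerivNum r t / (1 - t ^ r) ^ 2)
    (fun t ht => ?_) (fun t ht => ?_)
  · rw [interior_Ico] at ht
    exact (hasDerivAt_powRatio (by linarith) ht.1.le ht.2).hasDerivWithinAt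
  rw [interior_Ico] at ht
  have hden : 0 < 1 - t ^ r := sub_pos.mpr (rpow_lt_one ht.1.le ht.2 (by linarith))
  have hnum := powRatioDerivNum_pos hr ht.1.le ht.2
  exact div_pos (mul_pos (rpow_pos_of_pos (by linarith [ht.1]) _) hnum) (pow_pos hden 2)

lemma powRatio_zero {r : ℝ} (hr : r ≠ 0) : powRatio r 0 = 1 := by
  simp [powRatio, zero_rpow hr]

theorem stmt_3 (r : ℝ) (hr1 : 2 < r) (hr2 : r < 3) :
    ∃ t₂ : ℝ, t₂ ∈ Set.Ioo (0 : ℝ) 1 ∧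
      r - 2 - t₂ = (1 + t₂) ^ (r - 1) * (1 - t₂) / (1 - t₂ ^ r) - 1 ∧
      0 < r - 2 - t₂ ∧
      ∀ t : ℝ, t ∈ Set.Ioo (0 : ℝ) 1 →
        r - 2 - t = (1 + t) ^ (r - 1) * (1 - t) / (1 - t ^ r) - 1 →
        t = t₂ := by
  set f : ℝ → ℝ := fun t => powRatio r t + t - (r - 1) with hf
  have hroot (t : ℝ) : r - 2 - t = (1 + t) ^ (r - 1) * (1 - t) / (1 - t ^ r) - 1 ↔ f t = 0 := by
    simp only [hf, powRatio]
    constructor <;> intro h <;> linarith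
  have hf_mono : StrictMonoOn f (Ico 0 1) :=
    ((strictMonoOn_powRatio hr1).add strictMonoOn_id).add_const _
  have hf_cont : ContinuousOn f (Ico 0 1) :=
    ((continuousOn_powRatio (by linarith)).add continuousOn_id).sub continuousOn_const
  have hc : r - 2 ∈ Ico (0 : ℝ) 1 := ⟨by linarith, by linarith⟩
  have hf0 : f 0 = 2 - r := by simp only [hf, powRatio_zero (by linarith : r ≠ 0)]; ring
  have hfc : 0 < f (r - 2) := by
    have := strictMonoOn_powRatio hr1 ⟨le_rfl, zero_lt_one⟩ hc (by linarith)
    rw [powRatio_zero (by linarith)] at this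
    simp only [hf]
    linarith
  obtain ⟨t₂, ht₂, hft₂⟩ := intermediate_value_Ioo hc.1
    (hf_cont.mono (Icc_subset_Ico_right hc.2))
    (show (0 : ℝ) ∈ Ioo (f 0) (f (r - 2)) from ⟨by linarith, hfc⟩)
  have ht₂_lt : t₂ < r - 2 := ht₂.2
  refine ⟨t₂, ⟨ht₂.1, by linarith⟩, (hroot t₂).2 hft₂, by linarith, ?_⟩
  intro t ht heq
  exact hf_mono.injOn ⟨ht.1.le, ht.2⟩ ⟨ht₂.1.le, by linarith⟩
    (((hroot t).1 heq).trans hft₂.symm)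
end

section
/- For every real r ≥ 4 and every t with 0 < t < 1, we have (1+t)^{r−1} − (1 − t^r)/(1 − t) ≥ (r − 2)·t. -/
theorem stmt_11 (r t : ℝ) (hr : 4 ≤ r) (ht0 : 0 < t) (ht1 : t < 1) :
    (1 + t) ^ (r - 1) - (1 - t ^ r) / (1 - t) ≥ (r - 2) * t := by
  have h1t : (0:ℝ) < 1 + t := by linarith
  have hb1 : 1 + (r - 2) * t ≤ (1 + t) ^ (r - 2) :=
    one_add_mul_self_le_rpow_one_add (by linarith) (by linarith)
  have hb2 : 1 + (r - 2) * (t - 1) ≤ t ^ (r - 2) := by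
    have := one_add_mul_self_le_rpow_one_add (s := t - 1) (by linarith) (p := r - 2) (by linarith)
    simpa using this
  have e1 : (1 + t) ^ (r - 1) = (1 + t) ^ (r - 2) * (1 + t) := by
    rw [show r - 1 = r - 2 + 1 by ring, Real.rpow_add h1t, Real.rpow_one]
  have e2 : t ^ r = t ^ (r - 2) * t ^ 2 := by
    rw [show r = r - 2 + 2 by ring, Real.rpow_add ht0, Real.rpow_two]
    ring_nf
  have ht1' : (0:ℝ) < 1 - t := by linarith
  have hdiv : (1 - t ^ r) / (1 - t) ≤ 1 + t + (r - 2) * t ^ 2 := by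
    rw [div_le_iff₀ ht1', e2]
    nlinarith [sq_nonneg t, mul_pos ht0 ht0]
  have hA : (1 + (r - 2) * t) * (1 + t) ≤ (1 + t) ^ (r - 1) := by
    rw [e1]
    have := mul_le_mul_of_nonneg_right hb1 (le_of_lt h1t)
    linarith
  nlinarith [hA, hdiv]
end

section
/- Fix t with 0 < t < 1. The function r ↦ (1+t)^r/(1 − t^r) is nondecreasing on [2, ∞); that is, for all real numbers r_1, r_2 with 2 ≤ r_1 ≤ r_2 one has (1+t)^{r_1}/(1 − t^{r_1}) ≤ (1+t)^{r_2}/(1 − t^{r_2}). -/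
/-!
Write `s = r₂ - r₁ ≥ 0` and `u = t ^ r₁ ∈ (0, t²]`. Cross-multiplied, the claim is
`1 - u tˢ ≤ (1 + t)ˢ (1 - u)`. The tangent-line bounds `(1 + t)ˢ ≥ 1 + s log (1 + t)` and
`tˢ ≥ 1 + s log t` reduce this to `u (-log t) ≤ log (1 + t) (1 - u)`, which is linear in `u`
and at `u = t²` follows from `x - 1 ≤ x log x` applied at `x = t` and `x = 1 + t`.
-/

open Real

lemma Real.sub_one_le_mul_log {x : ℝ} (hx : 0 < x) : x - 1 ≤ x * log x := by
  have h := mul_le_mul_of_nonneg_left (one_sub_inv_le_log_of_pos hx) hx.le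
  rwa [mul_sub, mul_one, mul_inv_cancel₀ hx.ne'] at h

lemma Real.one_add_mul_log_le_rpow {x : ℝ} (hx : 0 < x) (s : ℝ) : 1 + s * log x ≤ x ^ s := by
  rw [rpow_def_of_pos hx, mul_comm s]
  linarith [add_one_le_exp (log x * s)]

lemma mul_neg_log_le_log_one_add_mul {t u : ℝ} (ht0 : 0 < t) (ht1 : t < 1) (hu : u ≤ t ^ 2) :
    u * -log t ≤ log (1 + t) * (1 - u) := by
  have hM : t * -log t ≤ 1 - t := by linarith [sub_one_le_mul_log ht0]
  have hL : t ≤ (1 + t) * log (1 + t) := by linarith [sub_one_le_mul_log (by linarith : 0 < 1 + t)]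
  have hM0 : 0 ≤ -log t := by linarith [log_nonpos ht0.le ht1.le]
  have hL0 : 0 ≤ log (1 + t) := log_nonneg (by linarith)
  calc u * -log t ≤ t ^ 2 * -log t := mul_le_mul_of_nonneg_right hu hM0
    _ ≤ t * (1 - t) := by nlinarith
    _ ≤ log (1 + t) * (1 - t ^ 2) := by nlinarith
    _ ≤ log (1 + t) * (1 - u) := by nlinarith

lemma one_sub_mul_rpow_le {t u s : ℝ} (ht0 : 0 < t) (ht1 : t < 1) (hu0 : 0 ≤ u)
    (hu : u ≤ t ^ 2) (hs : 0 ≤ s) : 1 - u * t ^ s ≤ (1 + t) ^ s * (1 - u) := by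
  have hu1 : u < 1 := hu.trans_lt (pow_lt_one₀ ht0.le ht1 two_ne_zero)
  have hkey := mul_le_mul_of_nonneg_left (mul_neg_log_le_log_one_add_mul ht0 ht1 hu) hs
  have ht := mul_le_mul_of_nonneg_left (one_add_mul_log_le_rpow ht0 s) hu0
  have h1t := mul_le_mul_of_nonneg_right
    (one_add_mul_log_le_rpow (by linarith : 0 < 1 + t) s) (sub_nonneg.mpr hu1.le)
  nlinarith

theorem stmt_12 (t : ℝ) (ht0 : 0 < t) (ht1 : t < 1) :
    MonotoneOn (fun r : ℝ => (1 + t) ^ r / (1 - t ^ r)) (Set.Ici (2 : ℝ)) := by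
  intro r₁ hr₁ r₂ hr₂ hr
  have h1t : 0 < 1 + t := by linarith
  have hlt : ∀ {r : ℝ}, r ∈ Set.Ici (2 : ℝ) → 0 < 1 - t ^ r := fun hr =>
    sub_pos.mpr (rpow_lt_one ht0.le ht1 (by linarith [Set.mem_Ici.mp hr]))
  have hu : t ^ r₁ ≤ t ^ 2 := by
    simpa using rpow_le_rpow_of_exponent_ge ht0 ht1.le (Set.mem_Ici.mp hr₁)
  have hmain := mul_le_mul_of_nonneg_left
    (one_sub_mul_rpow_le ht0 ht1 (rpow_nonneg ht0.le r₁) hu (sub_nonneg.mpr hr))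
    (rpow_nonneg h1t.le r₁)
  rw [← rpow_add ht0, add_sub_cancel, ← mul_assoc, ← rpow_add h1t, add_sub_cancel] at hmain
  dsimp only
  rw [div_le_div_iff₀ (hlt hr₁) (hlt hr₂)]
  linarith
end

section
/- For every real r ≥ 2 and every t with 0 ≤ t ≤ 1, we have 1 − r − r·t + r·t^{r−1} + (r−1)·t^r ≤ 0. -/
theorem stmt_14 (r t : ℝ) (hr : 2 ≤ r) (ht0 : 0 ≤ t) (ht1 : t ≤ 1) :
    1 - r - r * t + r * t ^ (r - 1) + (r - 1) * t ^ r ≤ 0 := by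
  have h1 : t ^ (r - 1) ≤ t := by
    rcases eq_or_lt_of_le ht0 with h | h
    · rw [← h, Real.zero_rpow (by linarith)]
    · calc t ^ (r - 1) ≤ t ^ (1 : ℝ) :=
            Real.rpow_le_rpow_of_exponent_ge h ht1 (by linarith)
        _ = t := Real.rpow_one t
  have h2 : t ^ r ≤ 1 := Real.rpow_le_one ht0 ht1 (by linarith)
  nlinarith [mul_le_mul_of_nonneg_left h1 (by linarith : (0:ℝ) ≤ r),
    mul_le_mul_of_nonneg_left h2 (by linarith : (0:ℝ) ≤ r - 1)]
end

section
/- For every real r with 1/2 ≤ r ≤ 1 and every q with 0 < q ≤ 1/2, we have (1 − 2q)/3 + (r − 1/3)·q^{2−1/r} + (2/3)·q^{3−1/r} ≤ 1/2. -/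
lemma stmt_15_aux (e q : ℝ) (he0 : 0 ≤ e) (he1 : e ≤ 1) (hq0 : 0 < q) (hq1 : q ≤ 1/2) :
    q ^ e ≤ (1 - e/2) * (1 + e * (2*q - 1)) := by
  have hsplit : q ^ e = (1/2 : ℝ) ^ e * (2*q) ^ e := by
    rw [← Real.mul_rpow (by norm_num) (by positivity), show (1/2:ℝ)*(2*q) = q by ring]
  have hb1 : (1/2 : ℝ) ^ e ≤ 1 - e/2 := by
    have h := rpow_one_add_le_one_add_mul_self (s := (-1/2 : ℝ)) (by norm_num) he0 he1
    have h1 : (1 + (-1/2) : ℝ) = 1/2 := by norm_num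
    rw [h1] at h
    linarith
  have hb2 : (2*q : ℝ) ^ e ≤ 1 + e * (2*q - 1) := by
    have h := rpow_one_add_le_one_add_mul_self (s := (2*q - 1 : ℝ)) (by linarith) he0 he1
    have h1 : (1 + (2*q - 1) : ℝ) = 2*q := by ring
    rw [h1] at h
    exact h
  have hpos2 : (0:ℝ) ≤ (2*q) ^ e := (Real.rpow_pos_of_pos (by linarith) e).le
  rw [hsplit]
  exact mul_le_mul hb1 hb2 hpos2 (by linarith)

theorem stmt_15 (r q : ℝ) (hr1 : 1 / 2 ≤ r) (hr2 : r ≤ 1)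
    (hq0 : 0 < q) (hq1 : q ≤ 1 / 2) :
    (1 - 2 * q) / 3 + (r - 1 / 3) * q ^ (2 - 1 / r) + (2 / 3) * q ^ (3 - 1 / r) ≤ 1 / 2 := by
  have hr0 : 0 < r := by linarith
  have hE0 : (0:ℝ) ≤ 2 - 1/r := by
    rw [sub_nonneg, div_le_iff₀ hr0]; linarith
  have hE1 : (2 - 1/r : ℝ) ≤ 1 := by
    rw [sub_le_iff_le_add]
    rw [show (1 + 1/r : ℝ) = (r + 1)/r by field_simp, le_div_iff₀ hr0]; nlinarith
  have hu : q ^ (2 - 1/r) ≤ (1 - (2 - 1/r)/2) * (1 + (2 - 1/r) * (2*q - 1)) :=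
    stmt_15_aux _ _ hE0 hE1 hq0 hq1
  have hB : (1 - (2 - 1/r)/2) * (1 + (2 - 1/r) * (2*q - 1))
      = (1 - r + (4*r - 2)*q) / (2*r^2) := by
    field_simp
    ring
  rw [hB] at hu
  have h3 : q ^ (3 - 1/r) = q * q ^ (2 - 1/r) := by
    rw [show (3 - 1/r : ℝ) = 1 + (2 - 1/r) by ring, Real.rpow_add hq0, Real.rpow_one]
  rw [h3]
  have hupos : (0:ℝ) < q ^ (2 - 1/r) := Real.rpow_pos_of_pos hq0 _
  have hcoef : (0:ℝ) ≤ r - 1/3 + (2/3) * q := by linarith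
  have hkey : (r - 1/3) * q ^ (2 - 1/r) + (2/3) * (q * q ^ (2 - 1/r))
      ≤ (r - 1/3 + (2/3)*q) * ((1 - r + (4*r - 2)*q) / (2*r^2)) := by
    have h := mul_le_mul_of_nonneg_left hu hcoef
    nlinarith [h]
  have hr2pos : (0:ℝ) < 6 * r^2 := by positivity
  have hrw : (1 - 2*q)/3 + (r - 1/3 + (2/3)*q) * ((1 - r + (4*r - 2)*q) / (2*r^2))
      = (2*r^2*(1 - 2*q) + (3*r - 1 + 2*q) * (1 - r + (4*r - 2)*q)) / (6*r^2) := by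
    field_simp
    ring
  have hfinal : (2*r^2*(1 - 2*q) + (3*r - 1 + 2*q) * (1 - r + (4*r - 2)*q)) / (6*r^2) ≤ 1/2 := by
    rw [div_le_iff₀ hr2pos]
    nlinarith [mul_nonneg (mul_nonneg (by linarith : (0:ℝ) ≤ 2*r-1) (by linarith : (0:ℝ) ≤ 2*r-1)) (by linarith : (0:ℝ) ≤ 1 - 2*q),
      mul_nonneg (mul_nonneg (by linarith : (0:ℝ) ≤ 2*r-1) hq0.le) (by linarith : (0:ℝ) ≤ 1 - 2*q)]
  linarith [hkey, hrw ▸ hfinal, hrw.symm ▸ hfinal]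
end

section
/- For every real r with 1/2 ≤ r ≤ 1 and every q with 0 < q ≤ 1/2, we have ((1−r)(2r−1)/3 · (1 − 2q) + r)·q^{2−1/r} ≤ 1/2. -/
theorem stmt_16 (r q : ℝ) (hr1 : 1 / 2 ≤ r) (hr2 : r ≤ 1)
    (hq0 : 0 < q) (hq1 : q ≤ 1 / 2) :
    ((1 - r) * (2 * r - 1) / 3 * (1 - 2 * q) + r) * q ^ (2 - 1 / r) ≤ 1 / 2 := by
  have hr0 : (0:ℝ) < r := by linarith
  set s : ℝ := 1 / r - 1 with hs
  have hs0 : 0 ≤ s := by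
    rw [hs, sub_nonneg, le_div_iff₀ hr0]; linarith
  have hs1 : s ≤ 1 := by
    rw [hs, sub_le_iff_le_add, div_le_iff₀ hr0]; linarith
  have hqinv : (1:ℝ) ≤ q⁻¹ := by
    rw [le_inv_comm₀ one_pos hq0]; linarith
  have hB : (q⁻¹) ^ s ≤ 1 + s * (q⁻¹ - 1) := by
    have := rpow_one_add_le_one_add_mul_self (s := q⁻¹ - 1) (by linarith) hs0 hs1
    simpa using this
  have hrw : q ^ (2 - 1 / r) = q * (q⁻¹) ^ s := by
    rw [show (2 - 1/r : ℝ) = 1 + (1 - 1/r) by ring, Real.rpow_add hq0, Real.rpow_one]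
    congr 1
    rw [Real.inv_rpow hq0.le, ← Real.rpow_neg hq0.le]
    congr 1
    rw [hs]; ring
  have hkey : q ^ (2 - 1 / r) ≤ q * (1 + s * (q⁻¹ - 1)) := by
    rw [hrw]
    exact mul_le_mul_of_nonneg_left hB hq0.le
  have hq2 : q * (1 + s * (q⁻¹ - 1)) = (q * (2 * r - 1) + (1 - r)) / r := by
    rw [hs]; field_simp; ring
  have hC : 0 ≤ (1 - r) * (2 * r - 1) / 3 * (1 - 2 * q) + r := by
    nlinarith [mul_nonneg (mul_nonneg (sub_nonneg.2 hr2) (by linarith : (0:ℝ) ≤ 2*r-1)) (by linarith : (0:ℝ) ≤ 1 - 2*q)]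
  have hfin : ((1 - r) * (2 * r - 1) / 3 * (1 - 2 * q) + r) *
      ((q * (2 * r - 1) + (1 - r)) / r) ≤ 1 / 2 := by
    rw [← mul_div_assoc, div_le_iff₀ hr0]
    nlinarith [sq_nonneg (1 - 2*q), sq_nonneg (2*r - 1), sq_nonneg ((2*r-1)*(1-2*q)),
      mul_nonneg (sub_nonneg.2 hq1) (sub_nonneg.2 hr2),
      mul_nonneg (mul_nonneg (sub_nonneg.2 hr2) (by linarith : (0:ℝ) ≤ 2*r-1)) (by linarith : (0:ℝ) ≤ 1 - 2*q),
      mul_nonneg (mul_nonneg (sub_nonneg.2 hr2) (by linarith : (0:ℝ) ≤ 2*r-1)) (sq_nonneg (1-2*q)),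
      sq_nonneg ((1-r)*(2*r-1)), mul_pos hr0 hq0]
  calc ((1 - r) * (2 * r - 1) / 3 * (1 - 2 * q) + r) * q ^ (2 - 1 / r)
      ≤ ((1 - r) * (2 * r - 1) / 3 * (1 - 2 * q) + r) * ((q * (2 * r - 1) + (1 - r)) / r) := by
        rw [← hq2]; exact mul_le_mul_of_nonneg_left hkey hC
    _ ≤ 1 / 2 := hfin
end

section
/- Let r be a real number with 1/2 < r ≤ 1 satisfying (3r+1)·3^{1/r} ≤ 63/4. Then for every q with 0 < q ≤ 1/3, we have −1/2 − 2q + 2r·q^{2−1/r} + 2·q^{3−1/r} ≤ 0. -/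
set_option maxHeartbeats 1600000 in
theorem stmt_17 (r : ℝ) (hr1 : 1 / 2 < r) (hr2 : r ≤ 1)
    (hr3 : (3 * r + 1) * (3 : ℝ) ^ (1 / r) ≤ 63 / 4)
    (q : ℝ) (hq0 : 0 < q) (hq1 : q ≤ 1 / 3) :
    -(1 / 2) - 2 * q + 2 * r * q ^ (2 - 1 / r) + 2 * q ^ (3 - 1 / r) ≤ 0 := by
  have hr0 : (0:ℝ) < r := by linarith
  have hrne : r ≠ 0 := ne_of_gt hr0
  have hu1 : 1 ≤ 1 / r := by rw [le_div_iff₀ hr0]; linarith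
  have hu2 : 1 / r < 2 := by rw [div_lt_iff₀ hr0]; linarith
  set s : ℝ := (3:ℝ) ^ (1 / r) with hs
  clear_value s
  have hs3 : (3:ℝ) ≤ s := by
    calc (3:ℝ) = (3:ℝ) ^ (1:ℝ) := (Real.rpow_one 3).symm
    _ ≤ s := by rw [hs]; exact Real.rpow_le_rpow_of_exponent_le (by norm_num) hu1
  have hs0 : (0:ℝ) < s := by linarith
  rcases le_or_gt (3/5 : ℝ) r with hr35 | hr35
  · -- main case : r ≥ 3/5
    have ha0 : (0:ℝ) ≤ 2 - 1/r := by linarith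
    have ha1 : 2 - 1/r ≤ 1 := by linarith
    have h32 : (3:ℝ) ^ (2:ℝ) = 9 := by
      rw [show (2:ℝ) = ((2:ℕ):ℝ) by norm_num, Real.rpow_natCast]; norm_num
    have hthird : ((1:ℝ)/3) ^ (2 - 1/r) = s / 9 := by
      rw [show ((1:ℝ)/3) = (3:ℝ) ^ (-1:ℝ) by rw [Real.rpow_neg_one]; norm_num,
        ← Real.rpow_mul (by norm_num : (0:ℝ) ≤ 3),
        show (-1:ℝ) * (2 - 1/r) = 1/r - 2 by ring,
        Real.rpow_sub (by norm_num : (0:ℝ) < 3), h32, ← hs]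
    have hP0 : 0 ≤ q ^ (2 - 1/r) := Real.rpow_nonneg hq0.le _
    have hPs : q ^ (2 - 1/r) ≤ s/9 := by
      calc q ^ (2 - 1/r) ≤ ((1:ℝ)/3) ^ (2 - 1/r) :=
            Real.rpow_le_rpow hq0.le (by linarith) ha0
      _ = s/9 := hthird
    have hPB : q ^ (2 - 1/r) ≤ s/9 * (1 + (2 - 1/r) * (3*q - 1)) := by
      have hbern : ((3:ℝ)*q) ^ (2 - 1/r) ≤ 1 + (2 - 1/r) * (3*q - 1) := by
        have := rpow_one_add_le_one_add_mul_self
          (show (-1:ℝ) ≤ 3*q - 1 by linarith) ha0 ha1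
        rwa [show (1:ℝ) + (3*q - 1) = 3*q by ring] at this
      calc q ^ (2 - 1/r) = ((1/3) * (3*q)) ^ (2 - 1/r) := by
            rw [show (1:ℝ)/3*(3*q) = q by ring]
      _ = ((1:ℝ)/3) ^ (2 - 1/r) * ((3:ℝ)*q) ^ (2 - 1/r) :=
            Real.mul_rpow (by norm_num) (by linarith)
      _ = s/9 * ((3:ℝ)*q) ^ (2 - 1/r) := by rw [hthird]
      _ ≤ s/9 * (1 + (2 - 1/r) * (3*q - 1)) := by
            apply mul_le_mul_of_nonneg_left hbern (by positivity)
    have e3 : q ^ (3 - 1/r) = q * q ^ (2 - 1/r) := by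
      rw [show (3 - 1/r) = 1 + (2 - 1/r) by ring, Real.rpow_add hq0, Real.rpow_one]
    have h2r : 2*r*(q ^ (2 - 1/r)) ≤ 2*s/9 * (1 - r + (6*r - 3)*q) := by
      calc 2*r*(q ^ (2 - 1/r)) ≤ 2*r*(s/9 * (1 + (2 - 1/r) * (3*q - 1))) :=
            mul_le_mul_of_nonneg_left hPB (by linarith)
      _ = 2*s/9 * (1 - r + (6*r - 3)*q) := by field_simp; ring
    have h2q : 2*q*(q ^ (2 - 1/r)) ≤ 2*q*(s/9) :=
      mul_le_mul_of_nonneg_left hPs (by linarith)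
    have hF0 : s * (1 - r) ≤ 9/4 := by
      nlinarith [mul_nonneg (show (0:ℝ) ≤ 1 - r by linarith)
        (show (0:ℝ) ≤ 63/4 - (3*r+1)*s by linarith), hs0, hs3]
    rw [e3]
    nlinarith [h2r, h2q,
      mul_nonneg (show (0:ℝ) ≤ 1 - 3*q by linarith)
        (show (0:ℝ) ≤ 9/4 - s*(1-r) by linarith),
      mul_nonneg hq0.le (show (0:ℝ) ≤ 63/4 - (3*r+1)*s by linarith)]
  · -- impossible case : r < 3/5 contradicts hr3
    exfalso
    have hlog : (1:ℝ) ≤ Real.log 3 := by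
      rw [Real.le_log_iff_exp_le (by norm_num)]
      have := Real.exp_one_lt_d9
      linarith
    have h53 : (5:ℝ)/3 ≤ 1/r := by
      rw [div_le_div_iff₀ (by norm_num) hr0]; linarith
    set c : ℝ := (3:ℝ) ^ ((5:ℝ)/3) with hc
    clear_value c
    have hc0 : 0 < c := by rw [hc]; positivity
    have hc3 : c ^ (3:ℕ) = 243 := by
      rw [hc]
      rw [← Real.rpow_natCast ((3:ℝ) ^ ((5:ℝ)/3)) 3,
        ← Real.rpow_mul (by norm_num : (0:ℝ) ≤ 3),
        show (5:ℝ)/3 * ((3:ℕ):ℝ) = ((5:ℕ):ℝ) by push_cast; ring,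
        Real.rpow_natCast]
      norm_num
    have hc624 : (156:ℝ)/25 ≤ c := by
      by_contra hcon
      push_neg at hcon
      have h2 : c ^ (3:ℕ) < ((156:ℝ)/25) ^ (3:ℕ) := pow_lt_pow_left₀ hcon hc0.le (by norm_num)
      rw [hc3] at h2
      norm_num at h2
    have hsplit : s = c * (3:ℝ) ^ (1/r - 5/3) := by
      rw [hs, hc, ← Real.rpow_add (by norm_num : (0:ℝ) < 3)]
      congr 1
      ring
    have hB : 1 + (1/r - 5/3) * Real.log 3 ≤ (3:ℝ) ^ (1/r - 5/3) := by
      rw [Real.rpow_def_of_pos (by norm_num : (0:ℝ) < 3)]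
      have h := Real.add_one_le_exp (Real.log 3 * (1/r - 5/3))
      linarith
    have h1 : 1/r - 2/3 ≤ 1 + (1/r - 5/3) * Real.log 3 := by
      have := mul_le_mul_of_nonneg_left hlog (show (0:ℝ) ≤ 1/r - 5/3 by linarith)
      linarith
    have hs_low : (156:ℝ)/25 * (1/r - 2/3) ≤ s := by
      rw [hsplit]
      calc (156:ℝ)/25 * (1/r - 2/3) ≤ c * (1/r - 2/3) := by
            apply mul_le_mul_of_nonneg_right hc624 (by linarith)
      _ ≤ c * ((3:ℝ) ^ (1/r - 5/3)) :=
            mul_le_mul_of_nonneg_left (h1.trans hB) hc0.le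
    have key : (3*r+1) * ((156:ℝ)/25 * (1/r - 2/3)) ≤ 63/4 := by
      have h := mul_le_mul_of_nonneg_left hs_low (show (0:ℝ) ≤ 3*r+1 by linarith)
      linarith
    have key2 := mul_le_mul_of_nonneg_left key hr0.le
    have hv : r * (1/r) = 1 := mul_one_div_cancel hrne
    nlinarith [key2, hv, mul_pos (show (0:ℝ) < 3/5 - r by linarith)
      (show (0:ℝ) < r - 1/2 by linarith)]
end

section
/- For every real r with 1 ≤ r ≤ 2 and every x with 3/4 ≤ x ≤ 1, we have r·x^{2−1/r} − 1/2 − x + x^{3−1/r} ≥ 0. -/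
theorem stmt_18 (r x : ℝ) (hr1 : 1 ≤ r) (hr2 : r ≤ 2)
    (hx1 : 3 / 4 ≤ x) (hx2 : x ≤ 1) :
    r * x ^ (2 - 1 / r) - 1 / 2 - x + x ^ (3 - 1 / r) ≥ 0 := by
  have hr0 : (0 : ℝ) < r := by linarith
  have hx0 : (0 : ℝ) < x := by linarith
  set u : ℝ := x ^ (1 / r) with hu
  have hu0 : 0 < u := Real.rpow_pos_of_pos hx0 _
  -- Bernoulli / weighted AM-GM:  x^(1/r) ≤ (1/r) x + (1 - 1/r)
  have hAM : u ≤ (1 / r) * x + (1 - 1 / r) * 1 := by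
    have h1 : (1 : ℝ)/r + (1 - 1/r) = 1 := by ring
    have := Real.geom_mean_le_arith_mean2_weighted
      (by positivity : (0:ℝ) ≤ 1/r)
      (by rw [sub_nonneg, div_le_one hr0]; exact hr1)
      hx0.le (by norm_num : (0:ℝ) ≤ 1) h1
    simpa [hu, one_div] using this
  have hc0 : 0 < (1 / r) * x + (1 - 1 / r) * 1 := lt_of_lt_of_le hu0 hAM
  have h2 : x ^ (2 - 1 / r) = x ^ (2:ℝ) / u := by
    rw [hu, ← Real.rpow_sub hx0]
  have h3 : x ^ (3 - 1 / r) = x ^ (3:ℝ) / u := by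
    rw [hu, ← Real.rpow_sub hx0]
  have h2' : x ^ (2:ℝ) = x ^ 2 := by
    rw [show (2:ℝ) = ((2:ℕ):ℝ) by norm_num, Real.rpow_natCast]
  have h3' : x ^ (3:ℝ) = x ^ 3 := by
    rw [show (3:ℝ) = ((3:ℕ):ℝ) by norm_num, Real.rpow_natCast]
  rw [ge_iff_le, h2, h3, h2', h3']
  have hx2d : x ^ 2 / ((1 / r) * x + (1 - 1 / r) * 1) ≤ x ^ 2 / u :=
    div_le_div_of_nonneg_left (by positivity) hu0 hAM
  have hx3d : x ^ 3 / ((1 / r) * x + (1 - 1 / r) * 1) ≤ x ^ 3 / u :=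
    div_le_div_of_nonneg_left (by positivity) hu0 hAM
  have hkey : (1 / 2 + x) * ((1 / r) * x + (1 - 1 / r) * 1) ≤ r * x ^ 2 + x ^ 3 := by
    have he : (1 / 2 + x) * ((1 / r) * x + (1 - 1 / r) * 1)
        = ((1 / 2 + x) * (r + x - 1)) / r := by
      rw [eq_div_iff hr0.ne']; field_simp; ring
    rw [he, div_le_iff₀ hr0]
    nlinarith [sq_nonneg (r - 1), sq_nonneg (x - 3/4),
      mul_nonneg (sub_nonneg.2 hr1) (sub_nonneg.2 hx1), sq_nonneg (r*x - 1),
      mul_pos hr0 hx0]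
  have key : 0 ≤ r * (x ^ 2 / ((1 / r) * x + (1 - 1 / r) * 1)) - 1 / 2 - x
      + x ^ 3 / ((1 / r) * x + (1 - 1 / r) * 1) := by
    have hsum : r * (x ^ 2 / ((1 / r) * x + (1 - 1 / r) * 1))
        + x ^ 3 / ((1 / r) * x + (1 - 1 / r) * 1)
        = (r * x ^ 2 + x ^ 3) / ((1 / r) * x + (1 - 1 / r) * 1) := by ring
    have hdiv : 1 / 2 + x ≤ (r * x ^ 2 + x ^ 3) / ((1 / r) * x + (1 - 1 / r) * 1) :=
      (le_div_iff₀ hc0).mpr hkey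
    linarith
  have := mul_le_mul_of_nonneg_left hx2d (by linarith : (0:ℝ) ≤ r)
  linarith
end

section
/- For every real r with 1 ≤ r ≤ 2 and every q with 0 < q ≤ 1/2, we have (r + 1 − 2q)·(1 − (1−q)^{2−1/r}) ≤ r − 1/2. -/
theorem stmt_19 (r q : ℝ) (hr1 : 1 ≤ r) (hr2 : r ≤ 2)
    (hq0 : 0 < q) (hq1 : q ≤ 1 / 2) :
    (r + 1 - 2 * q) * (1 - (1 - q) ^ (2 - 1 / r)) ≤ r - 1 / 2 := by
  have hr0 : (0:ℝ) < r := by linarith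
  have hp1 : 1 ≤ 2 - 1 / r := by
    have : 1 / r ≤ 1 := by
      rw [div_le_one hr0]; linarith
    linarith
  have hbern : 1 + (2 - 1 / r) * (-q) ≤ (1 + (-q)) ^ (2 - 1 / r) :=
    one_add_mul_self_le_rpow_one_add (by linarith) hp1
  have hb : 1 - (1 - q) ^ (2 - 1 / r) ≤ (2 - 1 / r) * q := by
    have : 1 - (2 - 1 / r) * q ≤ (1 - q) ^ (2 - 1 / r) := by
      simpa [sub_eq_add_neg, mul_neg] using hbern
    linarith
  have hpos : 0 < r + 1 - 2 * q := by linarith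
  have h1 : (r + 1 - 2 * q) * (1 - (1 - q) ^ (2 - 1 / r)) ≤
      (r + 1 - 2 * q) * ((2 - 1 / r) * q) := by
    exact mul_le_mul_of_nonneg_left hb hpos.le
  refine h1.trans ?_
  have hinv : 1 / r = r⁻¹ := one_div r
  rw [hinv]
  have key : (r + 1 - 2 * q) * ((2 - r⁻¹) * q) * r ≤ (r - 1 / 2) * r := by
    have hrinv : r⁻¹ * r = 1 := inv_mul_cancel₀ hr0.ne'
    nlinarith [mul_nonneg (by linarith : (0:ℝ) ≤ 1/2 - q) (by linarith : (0:ℝ) ≤ r - 2*q),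
      sq_nonneg (r - 1), mul_pos hq0 hr0]
  exact le_of_mul_le_mul_right key hr0
end
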